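/- Fix a real number q > 1. For all integers n ≥ 1, α, and x ≥ 1, the recursion vol_{n,α}(x) = Σ_{β=0}^{n} binom(n,β)_q · q^{α(n−β)} · vol_{n−β, α+β}(x−1) holds. -/

import Mathlib

open Finset

noncomputable section

/-- `μ_m := ∏_{i=1}^{m} (1 − q⁻¹)/(1 − q^{-i})`. -/
def mu (q : ℝ) (m : ℕ) : ℝ :=
  ∏ i ∈ Finset.range m, (1 - q⁻¹) / (1 - q ^ (-((i : ℤ) + 1)))

/-- For a weakly increasing tuple `λ`, the product `∏_j μ_{n_j}` over the lengths
`(n_1, …, n_s)` of the maximal constant segments of `λ` (equivalently, over the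
cardinalities of the fibers of `λ`). -/
def typeProd (q : ℝ) {n : ℕ} (l : Fin n → ℤ) : ℝ :=
  ∏ v ∈ Finset.image l Finset.univ, mu q ((Finset.univ.filter fun i => l i = v).card)

/-- The weight `w_n(λ) := ((∏_j μ_{n_j})/μ_n) · ∏_{i<j} q^{λ_j − λ_i}`. -/
def weight (q : ℝ) {n : ℕ} (l : Fin n → ℤ) : ℝ :=
  (typeProd q l / mu q n) *
    ∏ p ∈ Finset.univ.filter (fun p : Fin n × Fin n => p.1 < p.2), q ^ (l p.2 - l p.1)

open scoped Classical in
/-- The weakly increasing integer tuples `0 ≤ λ_1 ≤ ⋯ ≤ λ_n ≤ x`. -/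
def tuples (n x : ℕ) : Finset (Fin n → ℤ) :=
  (Fintype.piFinset fun _ : Fin n => Finset.Icc (0 : ℤ) (x : ℤ)).filter Monotone

/-- `vol_{n,α}(x) := Σ_{0 ≤ λ_1 ≤ ⋯ ≤ λ_n ≤ x} q^{α(λ_1+⋯+λ_n)} · w_n(λ)`
(for `n = 0` this is `1` by convention, the sum being over the single empty tuple). -/
def vol (q : ℝ) (n : ℕ) (α : ℤ) (x : ℕ) : ℝ :=
  ∑ l ∈ tuples n x, q ^ (α * ∑ i, l i) * weight q l

/-- The Gaussian binomial coefficient `∏_{i=1}^{β} (q^{n−β+i} − 1)/(q^{i} − 1)`. -/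
def gaussBinom (q : ℝ) (n β : ℕ) : ℝ :=
  ∏ i ∈ Finset.range β, (q ^ (n - β + i + 1) - 1) / (q ^ (i + 1) - 1)

/-- Evaluation of a finitely supported family of coefficients `c : ℕ × ℕ → ℝ` as the
`q`-quasi-polynomial `x ↦ Σ_{(a,b)} c(a,b) · q^{a·x} · x^{b}`. -/
def qQuasiEval (q : ℝ) (c : (ℕ × ℕ) →₀ ℝ) (x : ℕ) : ℝ :=
  c.sum fun p r => r * q ^ (p.1 * x) * (x : ℝ) ^ p.2

end

/-!
Sort the tuples `0 ≤ λ_1 ≤ ⋯ ≤ λ_n ≤ x` by the number `β` of their zero entries. Such a tuple is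
`(0, …, 0, λ' + 1)` for a unique `0 ≤ λ'_1 ≤ ⋯ ≤ λ'_{n-β} ≤ x - 1`. Under this correspondence the
zero block contributes the factor `μ_β` to the type product, the pair product gains
`q^{β(Σλ' + n - β)}`, the sum of the entries gains `n - β`, and the identity
`μ_n · binom(n,β)_q = μ_β · μ_{n-β} · q^{β(n-β)}` turns the normalisations `1/μ_n` and
`1/μ_{n-β}` into the Gaussian binomial.
-/

open Function

lemma prod_zpow_eq_zpow_sum {G₀ ι : Type*} [CommGroupWithZero G₀] {a : G₀} (ha : a ≠ 0)
    (s : Finset ι) (f : ι → ℤ) : ∏ i ∈ s, a ^ f i = a ^ ∑ i ∈ s, f i :=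
  Finset.cons_induction (by simp)
    (fun _ _ _ ih => by rw [prod_cons, sum_cons, ih, zpow_add₀ ha]) s

section Weight

variable {q : ℝ}

lemma mu_pos (hq : 1 < q) (m : ℕ) : 0 < mu q m :=
  prod_pos fun _ _ => div_pos (sub_pos.mpr (inv_lt_one_of_one_lt₀ hq))
    (sub_pos.mpr (zpow_lt_one_of_neg₀ hq (by omega)))

lemma mu_add_mul_gaussBinom (hq : 1 < q) (β m : ℕ) :
    mu q (β + m) * gaussBinom q (β + m) β = mu q β * mu q m * q ^ (β * m) := by
  have hq0 : q ≠ 0 := by positivity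
  have zpow_neg_succ (k : ℕ) : q ^ (-((k : ℤ) + 1)) = (q ^ (k + 1))⁻¹ := by
    rw [zpow_neg, ← zpow_natCast]; push_cast; rfl
  have pow_succ_sub_one_ne (k : ℕ) : q ^ (k + 1) - 1 ≠ 0 :=
    (sub_pos.mpr (one_lt_pow₀ hq k.succ_ne_zero)).ne'
  have factor (i : ℕ) :
      (1 - q⁻¹) / (1 - q ^ (-(((m + i : ℕ) : ℤ) + 1))) *
          ((q ^ (m + i + 1) - 1) / (q ^ (i + 1) - 1))
        = (1 - q⁻¹) / (1 - q ^ (-((i : ℤ) + 1))) * q ^ m := by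
    have := pow_succ_sub_one_ne (m + i)
    have := pow_succ_sub_one_ne i
    rw [zpow_neg_succ, zpow_neg_succ]
    field_simp
    ring
  rw [add_comm β m, mu, prod_range_add, ← mu, gaussBinom, Nat.add_sub_cancel,
    mul_assoc, ← prod_mul_distrib, prod_congr rfl fun i _ => factor i, prod_mul_distrib,
    prod_const, card_range, ← mu, ← pow_mul, mul_comm m β]
  ring

def pairSum {n : ℕ} (l : Fin n → ℤ) : ℤ :=
  ∑ p ∈ univ.filter (fun p : Fin n × Fin n => p.1 < p.2), (l p.2 - l p.1)

lemma pairSum_eq_sum {n : ℕ} (l : Fin n → ℤ) :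
    pairSum l = ∑ j : Fin n, (2 * (j : ℤ) + 1 - n) * l j := by
  have upper : ∑ p ∈ univ.filter (fun p : Fin n × Fin n => p.1 < p.2), l p.2
      = ∑ j : Fin n, (j : ℤ) * l j := by
    rw [sum_finset_product_right _ univ Iio (by simp)]
    simp
  have lower : ∑ p ∈ univ.filter (fun p : Fin n × Fin n => p.1 < p.2), l p.1
      = ∑ i : Fin n, ((n - 1 - i : ℕ) : ℤ) * l i := by
    rw [sum_finset_product _ univ Ioi (by simp)]
    simp
  rw [pairSum, sum_sub_distrib, upper, lower, ← sum_sub_distrib]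
  refine sum_congr rfl fun j _ => ?_
  have := j.isLt
  rw [Nat.cast_sub (by omega), Nat.cast_sub (by omega)]
  push_cast
  ring

lemma weight_eq (hq : q ≠ 0) {n : ℕ} (l : Fin n → ℤ) :
    weight q l = typeProd q l / mu q n * q ^ pairSum l := by
  rw [weight, prod_zpow_eq_zpow_sum hq, pairSum]

lemma card_filter_append_eq {α : Type*} [DecidableEq α] {a b : ℕ} (u : Fin a → α)
    (v : Fin b → α) (w : α) :
    (univ.filter fun i => Fin.append u v i = w).card
      = (univ.filter fun i => u i = w).card + (univ.filter fun i => v i = w).card := by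
  simp only [card_filter, Fin.sum_univ_add, Fin.append_left, Fin.append_right]

lemma card_filter_eq_zero_of_notMem_image {ι α : Type*} [Fintype ι] [DecidableEq α]
    {g : ι → α} {w : α} (hw : w ∉ univ.image g) : (univ.filter fun i => g i = w).card = 0 :=
  card_eq_zero.mpr <| filter_eq_empty_iff.mpr fun i _ hi =>
    hw (hi ▸ mem_image_of_mem g (mem_univ i))

lemma typeProd_append {a b : ℕ} (u : Fin a → ℤ) (v : Fin b → ℤ)
    (h : Disjoint (univ.image u) (univ.image v)) :
    typeProd q (Fin.append u v) = typeProd q u * typeProd q v := by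
  have image_append : univ.image (Fin.append u v) = univ.image u ∪ univ.image v := by
    ext w
    simp only [mem_image, mem_univ, true_and, mem_union]
    constructor
    · rintro ⟨i, rfl⟩
      induction i using Fin.addCases <;> simp
    · rintro (⟨i, rfl⟩ | ⟨i, rfl⟩)
      exacts [⟨_, Fin.append_left u v i⟩, ⟨_, Fin.append_right u v i⟩]
  rw [typeProd, image_append, prod_union h]
  congr 1 <;> refine prod_congr rfl fun w hw => ?_ <;> rw [card_filter_append_eq]
  · rw [card_filter_eq_zero_of_notMem_image (disjoint_left.mp h hw), add_zero]
  · rw [card_filter_eq_zero_of_notMem_image (disjoint_right.mp h hw), zero_add]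

lemma typeProd_comp_injective {n : ℕ} (l : Fin n → ℤ) {g : ℤ → ℤ} (hg : Injective g) :
    typeProd q (g ∘ l) = typeProd q l := by
  rw [typeProd, ← image_image, prod_image fun _ _ _ _ h => hg h]
  simp only [comp_apply, hg.eq_iff]
  rfl

lemma typeProd_const {n : ℕ} (c : ℤ) : typeProd q (fun _ : Fin n => c) = mu q n := by
  rcases n with _ | n
  · simp [typeProd, mu]
  · simp [typeProd, image_const univ_nonempty]

end Weight

section ZeroBlock

def zerosAppendSucc (β : ℕ) {m : ℕ} (l : Fin m → ℤ) : Fin (β + m) → ℤ :=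
  Fin.append (fun _ => 0) (fun k => l k + 1)

variable (β : ℕ) {m : ℕ} (l : Fin m → ℤ)

lemma sum_zerosAppendSucc : ∑ j, zerosAppendSucc β l j = ∑ k, l k + m := by
  simp [zerosAppendSucc, Fin.sum_univ_add, sum_add_distrib]

lemma pairSum_zerosAppendSucc :
    pairSum (zerosAppendSucc β l) = pairSum l + β * (∑ k, l k + m) := by
  -- the coefficients of the linear form of the constant tuple `1`, whose pair sum vanishes
  have sum_weights_eq_zero : ∑ k : Fin m, (2 * (k : ℤ) + 1 - m) = 0 := by
    simpa [pairSum] using (pairSum_eq_sum fun _ : Fin m => (1 : ℤ)).symm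
  rw [pairSum_eq_sum, pairSum_eq_sum]
  simp only [zerosAppendSucc, Fin.sum_univ_add, Fin.append_left, Fin.append_right,
    mul_zero, sum_const_zero, zero_add, Fin.val_natAdd]
  calc ∑ k : Fin m, (2 * ((β + k : ℕ) : ℤ) + 1 - ((β + m : ℕ) : ℤ)) * (l k + 1)
      = ∑ k : Fin m, ((2 * (k : ℤ) + 1 - m) * l k + β * l k + β + (2 * (k : ℤ) + 1 - m)) :=
        sum_congr rfl fun k _ => by push_cast; ring
    _ = _ := by
        simp only [sum_add_distrib, ← mul_sum, sum_weights_eq_zero, sum_const, card_univ,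
          Fintype.card_fin, nsmul_eq_mul]
        ring

lemma typeProd_zerosAppendSucc {q : ℝ} (hl : ∀ k, 0 ≤ l k) :
    typeProd q (zerosAppendSucc β l) = mu q β * typeProd q l := by
  have disjoint :
      Disjoint (univ.image fun _ : Fin β => (0 : ℤ)) (univ.image fun k => l k + 1) := by
    simp only [disjoint_left, mem_image, mem_univ, true_and, not_exists]
    rintro _ ⟨_, rfl⟩ k
    linarith [hl k]
  rw [zerosAppendSucc, typeProd_append _ _ disjoint, typeProd_const,
    show (fun k => l k + 1) = (· + 1) ∘ l from rfl,
    typeProd_comp_injective _ (add_left_injective 1)]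

lemma summand_zerosAppendSucc {q : ℝ} (hq : 1 < q) (hl : ∀ k, 0 ≤ l k) (α : ℤ) :
    q ^ (α * ∑ j, zerosAppendSucc β l j) * weight q (zerosAppendSucc β l)
      = gaussBinom q (β + m) β * q ^ (α * m) * (q ^ ((α + β) * ∑ k, l k) * weight q l) := by
  have hq0 : q ≠ 0 := by positivity
  have gaussBinom_eq :
      gaussBinom q (β + m) β = mu q β * mu q m * q ^ ((β : ℤ) * m) / mu q (β + m) := by
    rw [eq_div_iff (mu_pos hq _).ne', mul_comm, mu_add_mul_gaussBinom hq, ← zpow_natCast]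
    push_cast
    rfl
  rw [weight_eq hq0, weight_eq hq0, sum_zerosAppendSucc, pairSum_zerosAppendSucc,
    typeProd_zerosAppendSucc β l hl, gaussBinom_eq]
  simp only [mul_add, add_mul, zpow_add₀ hq0]
  field_simp [(mu_pos hq m).ne', (mu_pos hq (β + m)).ne']

end ZeroBlock

def zeroCount {n : ℕ} (l : Fin n → ℤ) : ℕ := (univ.filter fun i => l i = 0).card

lemma zeroCount_le {n : ℕ} (l : Fin n → ℤ) : zeroCount l ≤ n :=
  (card_filter_le _ _).trans_eq (card_fin n)

lemma eq_zero_iff_lt_zeroCount {n : ℕ} {l : Fin n → ℤ} (hl : Monotone l) (h0 : ∀ i, 0 ≤ l i)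
    (j : Fin n) : l j = 0 ↔ (j : ℕ) < zeroCount l := by
  constructor
  · intro hj
    calc (j : ℕ) < (Iic j).card := by simp
      _ ≤ zeroCount l := card_le_card fun i hi => by
          simp only [mem_Iic, mem_filter, mem_univ, true_and] at hi ⊢
          exact le_antisymm (hj ▸ hl hi) (h0 i)
  · intro hj
    by_contra hne
    have : zeroCount l ≤ j := by
      calc zeroCount l ≤ (Iio j).card := card_le_card fun i hi => by
            simp only [mem_Iio, mem_filter, mem_univ, true_and] at hi ⊢
            by_contra hji
            exact hne (le_antisymm (hi ▸ hl (not_lt.mp hji)) (h0 j))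
        _ = j := Fin.card_Iio j
    omega

lemma mem_tuples {n x : ℕ} {l : Fin n → ℤ} :
    l ∈ tuples n x ↔ (∀ i, 0 ≤ l i ∧ l i ≤ x) ∧ Monotone l := by
  simp [tuples, Fintype.mem_piFinset]

section Decomposition

variable {β m : ℕ}

lemma monotone_zerosAppendSucc {l : Fin m → ℤ} (hl : Monotone l) (h0 : ∀ k, 0 ≤ l k) :
    Monotone (zerosAppendSucc β l) := by
  intro i j hij
  induction i using Fin.addCases with
  | left i =>
    induction j using Fin.addCases with
    | left j => simp [zerosAppendSucc]
    | right k => simpa [zerosAppendSucc] using (by linarith [h0 k] : (0 : ℤ) ≤ l k + 1)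
  | right k =>
    induction j using Fin.addCases with
    | left j => exact absurd hij (by simp [Fin.le_def]; omega)
    | right k' => simpa [zerosAppendSucc] using hl ((Fin.natAdd_le_natAdd_iff β).mp hij)

lemma zeroCount_zerosAppendSucc {l : Fin m → ℤ} (h0 : ∀ k, 0 ≤ l k) :
    zeroCount (zerosAppendSucc β l) = β := by
  rw [zeroCount, zerosAppendSucc, card_filter_append_eq, filter_true_of_mem fun _ _ => rfl,
    card_fin, filter_false_of_mem fun k _ => by linarith [h0 k], card_empty, add_zero]

lemma zerosAppendSucc_mem_tuples {x : ℕ} (hx : 1 ≤ x) {l : Fin m → ℤ}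
    (hl : l ∈ tuples m (x - 1)) : zerosAppendSucc β l ∈ tuples (β + m) x := by
  obtain ⟨hbound, hmono⟩ := mem_tuples.mp hl
  refine mem_tuples.mpr ⟨fun i => ?_, monotone_zerosAppendSucc hmono fun k => (hbound k).1⟩
  induction i using Fin.addCases with
  | left i => simp [zerosAppendSucc]
  | right k =>
    simp only [zerosAppendSucc, Fin.append_right]
    have := hbound k
    push_cast [hx] at this
    omega

variable {x : ℕ} {l : Fin (β + m) → ℤ} (hl : l ∈ tuples (β + m) x) (hz : zeroCount l = β)
include hl hz

lemma tail_sub_one_mem_tuples : (fun k => l (Fin.natAdd β k) - 1) ∈ tuples m (x - 1) := by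
  obtain ⟨hbound, hmono⟩ := mem_tuples.mp hl
  refine mem_tuples.mpr ⟨fun k => ?_, fun k k' hkk' => ?_⟩
  · have hne : l (Fin.natAdd β k) ≠ 0 := by
      rw [Ne, eq_zero_iff_lt_zeroCount hmono (fun i => (hbound i).1), hz]
      simp
    have := hbound (Fin.natAdd β k)
    omega
  · simpa using hmono ((Fin.natAdd_le_natAdd_iff β).mpr hkk')

lemma zerosAppendSucc_tail_sub_one : zerosAppendSucc β (fun k => l (Fin.natAdd β k) - 1) = l := by
  obtain ⟨hbound, hmono⟩ := mem_tuples.mp hl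
  funext i
  induction i using Fin.addCases with
  | left i =>
    symm
    simp [zerosAppendSucc, eq_zero_iff_lt_zeroCount hmono (fun i => (hbound i).1), hz]
  | right k => simp [zerosAppendSucc]

end Decomposition

lemma sum_tuples_filter_zeroCount {q : ℝ} (hq : 1 < q) {n x β : ℕ} (hx : 1 ≤ x) (hβ : β ≤ n)
    (α : ℤ) :
    ∑ l ∈ (tuples n x).filter (fun l => zeroCount l = β), q ^ (α * ∑ i, l i) * weight q l
      = gaussBinom q n β * q ^ (α * ((n : ℤ) - β)) * vol q (n - β) (α + β) (x - 1) := by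
  obtain ⟨m, rfl⟩ := Nat.exists_eq_add_of_le hβ
  rw [Nat.add_sub_cancel_left, vol, mul_sum, show ((β + m : ℕ) : ℤ) - β = m by push_cast; ring]
  symm
  refine sum_nbij' (zerosAppendSucc β) (fun l k => l (Fin.natAdd β k) - 1)
    (fun l hl => ?_) (fun l hl => ?_) (fun l _ => ?_) (fun l hl => ?_) (fun l hl => ?_)
  · have h0 k := ((mem_tuples.mp hl).1 k).1
    exact mem_filter.mpr ⟨zerosAppendSucc_mem_tuples hx hl, zeroCount_zerosAppendSucc h0⟩
  · exact tail_sub_one_mem_tuples (mem_filter.mp hl).1 (mem_filter.mp hl).2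
  · simp [zerosAppendSucc]
  · exact zerosAppendSucc_tail_sub_one (mem_filter.mp hl).1 (mem_filter.mp hl).2
  · exact (summand_zerosAppendSucc β l hq (fun k => ((mem_tuples.mp hl).1 k).1) α).symm

theorem vol_recursion_two_general (q : ℝ) (hq : 1 < q) (n : ℕ) (α : ℤ)
    (x : ℕ) (hx : 1 ≤ x) :
    vol q n α x =
      ∑ β ∈ Finset.range (n + 1),
        gaussBinom q n β * q ^ (α * ((n : ℤ) - (β : ℤ))) * vol q (n - β) (α + (β : ℤ)) (x - 1) := by
  rw [vol, ← sum_fiberwise_of_maps_to (g := zeroCount) (t := range (n + 1))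
    fun l _ => mem_range.mpr (Nat.lt_succ_of_le (zeroCount_le l))]
  exact sum_congr rfl fun β hβ =>
    sum_tuples_filter_zeroCount hq hx (Nat.lt_succ_iff.mp (mem_range.mp hβ)) α

/-- **Second recursion for `vol_{n,α}`.** For `q > 1` and all integers `n ≥ 1`, `α`, `x ≥ 1`:
`vol_{n,α}(x) = Σ_{β=0}^{n} binom(n,β)_q · q^{α(n−β)} · vol_{n−β, α+β}(x−1)`. -/
theorem vol_recursion_two (q : ℝ) (hq : 1 < q) (n : ℕ) (hn : 1 ≤ n) (α : ℤ)
    (x : ℕ) (hx : 1 ≤ x) :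
    vol q n α x =
      ∑ β ∈ Finset.range (n + 1),
        gaussBinom q n β * q ^ (α * ((n : ℤ) - (β : ℤ))) * vol q (n - β) (α + (β : ℤ)) (x - 1) :=
  vol_recursion_two_general q hq n α x hx
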